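/- There exists a tree with degree sequence π = (4,4,2,1,1,1,1,1,1) (on 9 vertices) that admits no BFD-ordering; specifically, the tree consisting of two vertices of degree 4 joined by a path of length 2 through a degree-2 vertex, each degree-4 vertex additionally adjacent to three leaves, is not a BFD-tree. -/

import Mathlib

open SimpleGraph Finset

/-- The degree of vertex `v`: the number of its neighbors. -/
noncomputable def gdeg {V : Type*} (G : SimpleGraph V) (v : V) : ℕ :=
  (G.neighborSet v).ncard

/-- `lt` is a BFD-ordering of the connected graph `T` with root `v₀`:
a (strict, total, hence well-) ordering of the vertices with least element `v₀` such that
(B1) if `w₁ ≺ w₂` then every child `v₁` of `w₁` precedes every child `v₂` of `w₂`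
(children taken w.r.t. the breadth-first layer structure from `v₀`, i.e. `v` is a child
of `w` if `w ~ v` and `dist v₀ v = dist v₀ w + 1`), and
(B2) `v ≺ u` implies `deg v ≥ deg u`. -/
def IsBFDOrdering {V : Type*} [Fintype V] [DecidableEq V] (T : SimpleGraph V) (v₀ : V)
    (lt : V → V → Prop) : Prop :=
  IsStrictTotalOrder V lt ∧
  (∀ v : V, v ≠ v₀ → lt v₀ v) ∧
  (∀ w₁ w₂ v₁ v₂ : V, lt w₁ w₂ →
      T.Adj w₁ v₁ → T.dist v₀ v₁ = T.dist v₀ w₁ + 1 →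
      T.Adj w₂ v₂ → T.dist v₀ v₂ = T.dist v₀ w₂ + 1 →
      lt v₁ v₂) ∧
  (∀ v u : V, lt v u → gdeg T u ≤ gdeg T v)

/-- A BFD-tree: a tree admitting a BFD-ordering for some root. -/
def IsBFDTree {V : Type*} [Fintype V] [DecidableEq V] (T : SimpleGraph V) : Prop :=
  T.IsTree ∧ ∃ (v₀ : V) (lt : V → V → Prop), IsBFDOrdering T v₀ lt

/-!
In a BFD-ordering the root precedes every vertex, so it has maximum degree. If a vertex `b`
has larger degree than its parent `a`, then (B2) forces `b ≺ a`, and (B1) then puts every child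
of `b` before the child `b` of `a`, so (B2) again says the children of `b` have degree at least
`deg b`. In the tree at hand the root must be one of the two centres of degree `4`; the other
centre `b` is a grandchild of the root through the vertex of degree `2`, yet its children are
leaves.
-/

lemma gdeg_eq_degree {V : Type*} (G : SimpleGraph V) (v : V) [Fintype (G.neighborSet v)] :
    gdeg G v = G.degree v := by
  rw [gdeg, ← Nat.card_coe_set_eq, Nat.card_eq_fintype_card, card_neighborSet_eq_degree]

lemma SimpleGraph.sum_degrees_eq_two_mul_natCard_edgeSet {V : Type*} [Fintype V]
    (G : SimpleGraph V) [DecidableRel G.Adj] :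
    ∑ v, G.degree v = 2 * Nat.card G.edgeSet := by
  classical
  rw [sum_degrees_eq_twice_card_edges, edgeFinset_card, Nat.card_eq_fintype_card]

lemma SimpleGraph.IsTree.dist_eq_add_one_of_adj {V : Type*} {T : SimpleGraph V} (hT : T.IsTree)
    {u v w : V} (hvw : T.Adj v w) (hwv : T.dist u v ≠ T.dist u w + 1) :
    T.dist u w = T.dist u v + 1 :=
  (hT.dist_eq_dist_add_one_of_adj u hvw).resolve_left hwv

namespace IsBFDOrdering

variable {V : Type*} [Fintype V] [DecidableEq V] {T : SimpleGraph V} {r : V}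
  {lt : V → V → Prop}

lemma gdeg_le_gdeg_root (h : IsBFDOrdering T r lt) (v : V) : gdeg T v ≤ gdeg T r := by
  obtain rfl | hv := eq_or_ne v r
  · rfl
  · exact h.2.2.2 r v (h.2.1 v hv)

lemma gdeg_le_gdeg_of_child_of_gdeg_parent_lt (h : IsBFDOrdering T r lt) {a b c : V}
    (hab : T.Adj a b) (hb : T.dist r b = T.dist r a + 1)
    (hbc : T.Adj b c) (hc : T.dist r c = T.dist r b + 1)
    (hdeg : gdeg T a < gdeg T b) : gdeg T b ≤ gdeg T c := by
  obtain ⟨hord, -, hB1, hB2⟩ := h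
  have hba : lt b a := by
    rcases @trichotomous_of _ lt hord.toTrichotomous a b with hlt | heq | hlt
    · exact absurd (hB2 a b hlt) hdeg.not_ge
    · exact absurd heq hab.ne
    · exact hlt
  exact hB2 c b (hB1 b a c b hba hbc hc hab hb)

lemma gdeg_le_gdeg_of_path (h : IsBFDOrdering T r lt) (hT : T.IsTree) {a b c : V}
    (hra : T.Adj r a) (hab : T.Adj a b) (hbc : T.Adj b c) (hrb : r ≠ b) (hrc : ¬T.Adj r c)
    (hdeg : gdeg T a < gdeg T b) : gdeg T b ≤ gdeg T c := by
  have ha : T.dist r a = 1 := dist_eq_one_iff_adj.2 hra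
  have hb : T.dist r b = T.dist r a + 1 :=
    hT.dist_eq_add_one_of_adj hab fun _ => hrb (hT.connected.dist_eq_zero_iff.1 (by omega))
  have hc : T.dist r c = T.dist r b + 1 :=
    hT.dist_eq_add_one_of_adj hbc fun _ => hrc (dist_eq_one_iff_adj.1 (by omega))
  exact h.gdeg_le_gdeg_of_child_of_gdeg_parent_lt hab hb hbc hc hdeg

end IsBFDOrdering

abbrev subdividedDoubleStar : SimpleGraph (Fin 9) :=
  SimpleGraph.fromEdgeSet
    {s(0, 1), s(0, 2), s(1, 3), s(1, 4), s(1, 5), s(2, 6), s(2, 7), s(2, 8)}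

lemma gdeg_subdividedDoubleStar (v : Fin 9) :
    gdeg subdividedDoubleStar v = ![2, 4, 4, 1, 1, 1, 1, 1, 1] v := by
  rw [gdeg_eq_degree]
  revert v
  decide

lemma subdividedDoubleStar_isTree : subdividedDoubleStar.IsTree := by
  have hsum : ∑ v, subdividedDoubleStar.degree v = 16 := by decide
  have hedges := subdividedDoubleStar.sum_degrees_eq_two_mul_natCard_edgeSet
  rw [isTree_iff_connected_and_card, Nat.card_fin]
  exact ⟨by decide, by omega⟩

lemma not_isBFDTree_subdividedDoubleStar : ¬IsBFDTree subdividedDoubleStar := by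
  rintro ⟨hT, r, lt, h⟩
  have hdeg := gdeg_subdividedDoubleStar
  have hr : r = 1 ∨ r = 2 := by
    have hmax := h.gdeg_le_gdeg_root 1
    rw [hdeg, hdeg] at hmax
    exact (by decide : ∀ v : Fin 9, 4 ≤ ![2, 4, 4, 1, 1, 1, 1, 1, 1] v → v = 1 ∨ v = 2) r hmax
  obtain rfl | rfl := hr
  · have := h.gdeg_le_gdeg_of_path hT (a := 0) (b := 2) (c := 6) (by decide) (by decide)
      (by decide) (by decide) (by decide) (by simp [hdeg])
    simp [hdeg] at this
  · have := h.gdeg_le_gdeg_of_path hT (a := 0) (b := 1) (c := 3) (by decide) (by decide)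
      (by decide) (by decide) (by decide) (by simp [hdeg])
    simp [hdeg] at this

/-- The tree consisting of two degree-4 vertices `1, 2` joined through the
degree-2 vertex `0`, with three leaves attached to each of `1` and `2`, is a
tree with degree sequence `(4,4,2,1,1,1,1,1,1)` that is not a BFD-tree. -/
theorem stmt10 :
    ∃ G : SimpleGraph (Fin 9),
      G = SimpleGraph.fromEdgeSet
          ({s((0 : Fin 9), 1), s(0, 2), s(1, 3), s(1, 4), s(1, 5),
            s(2, 6), s(2, 7), s(2, 8)} : Set (Sym2 (Fin 9))) ∧
      G.IsTree ∧
      (∃ σ : Equiv.Perm (Fin 9), ∀ i, gdeg G (σ i) = ![4, 4, 2, 1, 1, 1, 1, 1, 1] i) ∧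
      ¬ IsBFDTree G := by
  refine ⟨subdividedDoubleStar, rfl, subdividedDoubleStar_isTree,
    ⟨Equiv.swap 0 2 * Equiv.swap 0 1, ?_⟩, not_isBFDTree_subdividedDoubleStar⟩
  simp only [gdeg_subdividedDoubleStar]
  decide
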